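/- For every k ≥ 0, the language L(A_k) is not k-piecewise testable, where A_k is the NFA with states {0, 1, …, k}, alphabet {a_0, a_1, …, a_k}, all states initial, accepting state 0, and transitions: i·a_j = {i} whenever k ≥ i > j ≥ 0, and i·a_i = {0, 1, …, i−1} whenever k ≥ i ≥ 1 (no other transitions). -/

import Mathlib

/-- `subk k w` is the set of scattered subwords of `w` of length at most `k`. -/
def subk {α : Type*} (k : ℕ) (w : List α) : Set (List α) :=
  {u | u.length ≤ k ∧ u.Sublist w}

/-- Two words are `k`-equivalent if they have the same subwords of length at most `k`. -/
def kEquiv {α : Type*} (k : ℕ) (u v : List α) : Prop :=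
  subk k u = subk k v

/-- A language is `k`-piecewise testable (Simon's characterization):
`k`-equivalent words are equi-members. -/
def IsPT {α : Type*} (k : ℕ) (L : Language α) : Prop :=
  ∀ u v : List α, kEquiv k u v → (u ∈ L ↔ v ∈ L)

/-- A DFA is minimal if all states are reachable and pairwise distinguishable. -/
def IsMinimalDFA {α σ : Type*} (A : DFA α σ) : Prop :=
  (∀ q : σ, ∃ w : List α, A.eval w = q) ∧
  ∀ p q : σ,
    (∀ w : List α, (A.evalFrom p w ∈ A.accept ↔ A.evalFrom q w ∈ A.accept)) → p = q

/-- There is a simple path (pairwise distinct states) with `m` transitions in the DFA `A`. -/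
def DFAHasSimplePath {α σ : Type*} (A : DFA α σ) (m : ℕ) : Prop :=
  ∃ (qs : Fin (m + 1) → σ) (as : Fin m → α),
    Function.Injective qs ∧ ∀ i : Fin m, A.step (qs i.castSucc) (as i) = qs i.succ

/-- The depth of a DFA: the number of transitions on a longest simple path. -/
noncomputable def dfaDepth {α σ : Type*} (A : DFA α σ) : ℕ :=
  sSup {m | DFAHasSimplePath A m}

/-- There is a simple path (pairwise distinct states) with `m` transitions in the NFA `A`. -/
def NFAHasSimplePath {α σ : Type*} (A : NFA α σ) (m : ℕ) : Prop :=
  ∃ (qs : Fin (m + 1) → σ) (as : Fin m → α),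
    Function.Injective qs ∧ ∀ i : Fin m, qs i.succ ∈ A.step (qs i.castSucc) (as i)

/-- The depth of an NFA: the number of transitions on a longest simple path. -/
noncomputable def nfaDepth {α σ : Type*} (A : NFA α σ) : ℕ :=
  sSup {m | NFAHasSimplePath A m}

/-- The NFA `A_k`: states `{0,…,k}`, alphabet `{a_0,…,a_k}` (both modeled by
`Fin (k+1)`), all states initial, accepting state `0`, with `i·a_j = {i}` for
`i > j` and `i·a_i = {0,…,i-1}` for `i ≥ 1` (no other transitions). -/
def Ak (k : ℕ) : NFA (Fin (k + 1)) (Fin (k + 1)) where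
  step := fun q a =>
    if a < q then {q} else if q = a ∧ 0 < q then {p | p < q} else ∅
  start := Set.univ
  accept := {0}

/-!
The witness pair is `u = C_k C_{k-1} ⋯ C_1` and `u a_0`, where `C_i = a_0 a_1 ⋯ a_i`.
Started in state `k`, the automaton reads each block `C_i` in state `i`, looping on
`a_0, …, a_{i-1}` and dropping to `i - 1` on `a_i`, so `u` is accepted; no word ending in `a_0`
is accepted, because `a_0` never leads into state `0`. On the other hand `u ∼_k u a_0`: a subword
`z` of `u` with `|z| < k` either uses the first block, and then induction on the number of blocks
applies to the rest of `z`, or it lies in `C_{k-1} ⋯ C_1`, which embeds blockwise into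
`C_k ⋯ C_2`, leaving the `a_0` of `C_1` free.
-/

section Subwords

variable {α : Type*}

theorem kEquiv_append_singleton {k : ℕ} {w : List α} {a : α}
    (h : ∀ z : List α, z.Sublist w → z.length < k → (z ++ [a]).Sublist w) :
    kEquiv k w (w ++ [a]) := by
  ext z
  refine ⟨fun ⟨hlen, hz⟩ => ⟨hlen, hz.trans (List.sublist_append_left _ _)⟩, ?_⟩
  rintro ⟨hlen, hz⟩
  refine ⟨hlen, ?_⟩
  obtain ⟨z₁, z₂, rfl, hz₁, hz₂⟩ := List.sublist_append_iff.mp hz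
  rcases List.sublist_singleton.mp hz₂ with rfl | rfl
  · simpa using hz₁
  · simp only [List.length_append, List.length_singleton] at hlen
    exact h z₁ hz₁ (by omega)

def prefixWord (c : ℕ → α) (j : ℕ) : List α :=
  (List.range (j + 1)).map c

def staircase (c : ℕ → α) : ℕ → List α
  | 0 => []
  | j + 1 => prefixWord c (j + 1) ++ staircase c j

theorem prefixWord_succ (c : ℕ → α) (j : ℕ) :
    prefixWord c (j + 1) = prefixWord c j ++ [c (j + 1)] := by
  simp [prefixWord, List.range_succ]

theorem prefixWord_one (c : ℕ → α) : prefixWord c 1 = [c 0, c 1] := rfl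

theorem staircase_append_sublist_staircase_succ (c : ℕ → α) (j : ℕ) :
    (staircase c j ++ [c 0]).Sublist (staircase c (j + 1)) := by
  induction j with
  | zero => simp [staircase, prefixWord_one]
  | succ j ih =>
    rw [staircase, List.append_assoc]
    exact ((List.range_sublist.mpr (by omega)).map c).append ih

theorem append_sublist_staircase {c : ℕ → α} {j : ℕ} {z : List α}
    (hz : z.Sublist (staircase c j)) (hlen : z.length < j) :
    (z ++ [c 0]).Sublist (staircase c j) := by
  induction j generalizing z with
  | zero => omega
  | succ j ih =>
    obtain ⟨z₁, z₂, rfl, hz₁, hz₂⟩ := List.sublist_append_iff.mp hz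
    cases z₁ with
    | nil => exact (hz₂.append_right _).trans (staircase_append_sublist_staircase_succ c j)
    | cons a z₁ =>
      simp only [List.length_append, List.length_cons] at hlen
      rw [List.append_assoc]
      exact hz₁.append (ih hz₂ (by omega))

theorem kEquiv_staircase_append (c : ℕ → α) (k : ℕ) :
    kEquiv k (staircase c k) (staircase c k ++ [c 0]) :=
  kEquiv_append_singleton fun _ hz hlen => append_sublist_staircase hz hlen

end Subwords

namespace Ak

open Fin.NatCast

variable {k : ℕ}

theorem mem_step_of_lt {q a : Fin (k + 1)} (h : a < q) : q ∈ (Ak k).step q a := by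
  simp [Ak, h]

theorem mem_step_self_of_lt {p q : Fin (k + 1)} (h : p < q) : p ∈ (Ak k).step q q := by
  simp [Ak, h, (Fin.zero_le p).trans_lt h]

theorem zero_notMem_step_zero (q : Fin (k + 1)) : 0 ∉ (Ak k).step q 0 := by
  rcases (Fin.zero_le q).eq_or_lt with rfl | hq
  · simp [Ak]
  · simp [Ak, hq, hq.ne]

theorem append_zero_notMem_accepts (w : List (Fin (k + 1))) : w ++ [0] ∉ (Ak k).accepts := by
  rintro ⟨_, rfl, h⟩
  rw [NFA.eval, NFA.evalFrom_append, NFA.evalFrom_singleton, NFA.mem_stepSet] at h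
  obtain ⟨q, -, hq⟩ := h
  exact zero_notMem_step_zero q hq

theorem mem_evalFrom_of_forall_lt {q : Fin (k + 1)} {S : Set (Fin (k + 1))} (hq : q ∈ S)
    {w : List (Fin (k + 1))} (hw : ∀ a ∈ w, a < q) : q ∈ (Ak k).evalFrom S w := by
  induction w generalizing S with
  | nil => exact hq
  | cons a w ih =>
    rw [NFA.evalFrom_cons]
    refine ih (NFA.mem_stepSet.mpr ⟨q, hq, mem_step_of_lt (hw a (by simp))⟩) ?_
    exact fun b hb => hw b (List.mem_cons_of_mem a hb)

theorem mem_evalFrom_prefixWord {j : ℕ} (hj : j + 1 ≤ k) {S : Set (Fin (k + 1))}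
    (hS : ((j + 1 : ℕ) : Fin (k + 1)) ∈ S) :
    (j : Fin (k + 1)) ∈ (Ak k).evalFrom S (prefixWord (↑) (j + 1)) := by
  have hloop : ((j + 1 : ℕ) : Fin (k + 1)) ∈ (Ak k).evalFrom S (prefixWord (↑) j) := by
    refine mem_evalFrom_of_forall_lt hS fun a ha => ?_
    obtain ⟨i, hi, rfl⟩ := List.mem_map.mp ha
    exact Fin.natCast_strictMono hj (List.mem_range.mp hi)
  rw [prefixWord_succ, NFA.evalFrom_append, NFA.evalFrom_singleton, NFA.mem_stepSet]
  exact ⟨_, hloop, mem_step_self_of_lt (Fin.natCast_strictMono hj j.lt_succ_self)⟩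

theorem zero_mem_evalFrom_staircase {j : ℕ} (hj : j ≤ k) {S : Set (Fin (k + 1))}
    (hS : (j : Fin (k + 1)) ∈ S) : 0 ∈ (Ak k).evalFrom S (staircase (↑) j) := by
  induction j generalizing S with
  | zero => exact hS
  | succ j ih =>
    rw [staircase, NFA.evalFrom_append]
    exact ih (by omega) (mem_evalFrom_prefixWord hj hS)

theorem staircase_mem_accepts : staircase (↑) k ∈ (Ak k).accepts :=
  ⟨0, rfl, zero_mem_evalFrom_staircase le_rfl (Set.mem_univ _)⟩

end Ak

open Fin.NatCast in
theorem stmt12 (k : ℕ) : ¬ IsPT k (Ak k).accepts := fun h =>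
  Ak.append_zero_notMem_accepts _
    ((h _ _ (kEquiv_staircase_append (↑) k)).mp Ak.staircase_mem_accepts)
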